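/- arXiv:2604.23864 — 3 statements merged into one kernel-verified Lean document; each statement's English description precedes it below -/
import Mathlib

section
/- Let (X, d, μ) be a doubling metric measure space with doubling constant D. Then for every y ∈ X, every r > 0 and every α > 0, the tail integral satisfies ∫_{X ∖ B(y,r)} d(x,y)^{−α} / μ(B(x, d(x,y))) dμ(x) ≤ D² · r^{−α} / (1 − 2^{−α}). -/
open MeasureTheory Metric ENNReal

/-- In a doubling metric measure space with doubling constant `D`,
for every `y`, `r > 0` and `α > 0`,
`∫_{X ∖ B(y,r)} d(x,y)^{−α} / μ(B(x, d(x,y))) dμ(x) ≤ D² · r^{−α} / (1 − 2^{−α})`. -/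
theorem doubling_tail_integral_bound {X : Type*} [MetricSpace X] [MeasurableSpace X]
    (μ : Measure X) (D : ℝ≥0∞) (hD : 1 ≤ D)
    (hpos : ∀ (x : X) (r : ℝ), 0 < r → 0 < μ (ball x r))
    (hfin : ∀ (x : X) (r : ℝ), 0 < r → μ (ball x r) < ⊤)
    (hdoub : ∀ (x : X) (r : ℝ), 0 < r → μ (ball x (2 * r)) ≤ D * μ (ball x r))
    (y : X) (r : ℝ) (hr : 0 < r) (α : ℝ) (hα : 0 < α) :
    ∫⁻ x in (ball y r)ᶜ,
        ENNReal.ofReal (dist x y ^ (-α)) / μ (ball x (dist x y)) ∂μ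
      ≤ D ^ 2 * ENNReal.ofReal (r ^ (-α) / (1 - 2 ^ (-α))) := by
  set f : X → ℝ≥0∞ := fun x => ENNReal.ofReal (dist x y ^ (-α)) / μ (ball x (dist x y))
    with hfdef
  set A : ℕ → Set X := fun k => ball y (2 ^ (k + 1) * r) \ ball y (2 ^ k * r) with hAdef
  set q : ℝ≥0∞ := ENNReal.ofReal ((2 : ℝ) ^ (-α)) with hqdef
  have h2α0 : (0 : ℝ) ≤ (2 : ℝ) ^ (-α) := Real.rpow_nonneg (by norm_num) _
  have h2α1 : (2 : ℝ) ^ (-α) < 1 :=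
    Real.rpow_lt_one_of_one_lt_of_neg one_lt_two (by linarith)
  -- covering of the complement of the ball by annuli
  have hcover : (ball y r)ᶜ ⊆ ⋃ k, A k := by
    intro x hx
    have hxr : r ≤ dist x y := by simpa [not_lt] using hx
    have hex : ∃ k : ℕ, dist x y < 2 ^ (k + 1) * r := by
      obtain ⟨k, hk⟩ := pow_unbounded_of_one_lt (dist x y / r) (one_lt_two (α := ℝ))
      refine ⟨k, ?_⟩
      have : dist x y < 2 ^ k * r := by
        rw [div_lt_iff₀ hr] at hk; linarith
      calc dist x y < 2 ^ k * r := this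
        _ ≤ 2 ^ (k + 1) * r := by
            have : (2 : ℝ) ^ k ≤ 2 ^ (k + 1) :=
              pow_le_pow_right₀ (by norm_num) (Nat.le_succ k)
            nlinarith
    set k := Nat.find hex with hk
    have hlt : dist x y < 2 ^ (k + 1) * r := Nat.find_spec hex
    have hge : 2 ^ k * r ≤ dist x y := by
      rcases Nat.eq_zero_or_pos k with h0 | h0
      · simpa [h0] using hxr
      · have hmin := Nat.find_min hex (Nat.sub_lt h0 one_pos)
        push_neg at hmin
        have hke : k - 1 + 1 = k := by omega
        rwa [← hk, hke] at hmin
    exact Set.mem_iUnion.2 ⟨k, by simp [hAdef, Metric.mem_ball, hlt, not_lt, hge]⟩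
  -- the per-annulus bound
  have hterm : ∀ k : ℕ, ∫⁻ x in A k, f x ∂μ
      ≤ D ^ 2 * (ENNReal.ofReal (r ^ (-α)) * q ^ k) := by
    intro k
    set R : ℝ := 2 ^ k * r with hRdef
    have hR : 0 < R := by positivity
    have hm0 : μ (ball y R) ≠ 0 := (hpos y R hR).ne'
    have hmt : μ (ball y R) ≠ ⊤ := (hfin y R hR).ne
    set a' : ℝ≥0∞ := ENNReal.ofReal (R ^ (-α)) with ha'def
    set c : ℝ≥0∞ := a' * D / μ (ball y R) with hcdef
    -- pointwise bound on the annulus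
    have hpt : ∀ x ∈ A k, f x ≤ c := by
      intro x hx
      obtain ⟨hx1, hx2⟩ := hx
      have hlo : R ≤ dist x y := by simpa [not_lt] using hx2
      have hd0 : 0 < dist x y := lt_of_lt_of_le hR hlo
      have hb0 : μ (ball x (dist x y)) ≠ 0 := (hpos x _ hd0).ne'
      have hbt : μ (ball x (dist x y)) ≠ ⊤ := (hfin x _ hd0).ne
      have haa' : ENNReal.ofReal (dist x y ^ (-α)) ≤ a' :=
        ENNReal.ofReal_le_ofReal
          (Real.rpow_le_rpow_of_nonpos hR hlo (by linarith))
      have hsub : ball y R ⊆ ball x (2 * dist x y) := by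
        intro z hz
        rw [Metric.mem_ball] at hz ⊢
        have := dist_triangle z y x
        rw [dist_comm y x] at this
        linarith
      have hkey : μ (ball y R) ≤ D * μ (ball x (dist x y)) :=
        le_trans (measure_mono hsub) (hdoub x _ hd0)
      rw [hfdef]
      dsimp only
      rw [ENNReal.div_le_iff hb0 hbt, hcdef]
      have hrw : a' * D / μ (ball y R) * μ (ball x (dist x y))
          = a' * D * μ (ball x (dist x y)) / μ (ball y R) := by
        rw [div_eq_mul_inv, div_eq_mul_inv, mul_right_comm]
      rw [hrw, ENNReal.le_div_iff_mul_le (Or.inl hm0) (Or.inl hmt), mul_assoc]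
      exact mul_le_mul' haa' hkey
    have h1 : ∫⁻ x in A k, f x ∂μ ≤ c * μ (A k) := by
      calc ∫⁻ x in A k, f x ∂μ ≤ ∫⁻ _ in A k, c ∂μ := setLIntegral_mono measurable_const hpt
        _ = c * μ (A k) := setLIntegral_const _ _
    have h2 : μ (A k) ≤ D * μ (ball y R) := by
      have heq : (2 : ℝ) ^ (k + 1) * r = 2 * R := by rw [hRdef]; ring
      calc μ (A k) ≤ μ (ball y (2 ^ (k + 1) * r)) := measure_mono fun x hx => hx.1
        _ = μ (ball y (2 * R)) := by rw [heq]
        _ ≤ D * μ (ball y R) := hdoub y R hR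
    have h3 : c * (D * μ (ball y R)) = D ^ 2 * a' := by
      rw [hcdef, div_eq_mul_inv]
      rw [mul_comm D (μ (ball y R)), ← mul_assoc, mul_assoc (a' * D)]
      rw [ENNReal.inv_mul_cancel hm0 hmt, mul_one]
      ring
    have ha'eq : a' = ENNReal.ofReal (r ^ (-α)) * q ^ k := by
      rw [ha'def, hRdef]
      rw [Real.mul_rpow (by positivity) hr.le]
      rw [ENNReal.ofReal_mul (by positivity)]
      rw [hqdef, ← ENNReal.ofReal_pow h2α0]
      rw [mul_comm]
      congr 1
      rw [← Real.rpow_natCast ((2:ℝ) ^ (-α)) k, ← Real.rpow_natCast (2:ℝ) k,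
        ← Real.rpow_mul (by norm_num), ← Real.rpow_mul (by norm_num), mul_comm]
    calc ∫⁻ x in A k, f x ∂μ ≤ c * μ (A k) := h1
      _ ≤ c * (D * μ (ball y R)) := mul_le_mul_right h2 _
      _ = D ^ 2 * a' := h3
      _ = D ^ 2 * (ENNReal.ofReal (r ^ (-α)) * q ^ k) := by rw [ha'eq]
  -- putting things together
  have hRHS : ENNReal.ofReal (r ^ (-α) / (1 - 2 ^ (-α)))
      = ENNReal.ofReal (r ^ (-α)) * (1 - q)⁻¹ := by
    rw [div_eq_mul_inv, ENNReal.ofReal_mul (by positivity),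
      ENNReal.ofReal_inv_of_pos (by linarith), hqdef,
      ENNReal.ofReal_sub _ h2α0, ENNReal.ofReal_one]
  calc ∫⁻ x in (ball y r)ᶜ, f x ∂μ ≤ ∫⁻ x in ⋃ k, A k, f x ∂μ :=
        lintegral_mono_set hcover
    _ ≤ ∑' k, ∫⁻ x in A k, f x ∂μ := lintegral_iUnion_le _ _
    _ ≤ ∑' k, D ^ 2 * (ENNReal.ofReal (r ^ (-α)) * q ^ k) :=
        ENNReal.tsum_le_tsum hterm
    _ = D ^ 2 * (ENNReal.ofReal (r ^ (-α)) * ∑' k, q ^ k) := by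
        rw [ENNReal.tsum_mul_left, ENNReal.tsum_mul_left]
    _ = D ^ 2 * (ENNReal.ofReal (r ^ (-α)) * (1 - q)⁻¹) := by
        rw [ENNReal.tsum_geometric]
    _ = D ^ 2 * ENNReal.ofReal (r ^ (-α) / (1 - 2 ^ (-α))) := by rw [hRHS]
end

section
/- Let d ≥ 1 be an integer and let K : ℝ^d → ℂ be 2πℤ^d-periodic (K(y + 2πn) = K(y) for all y ∈ ℝ^d and n ∈ ℤ^d) and differentiable at every point of ℝ^d ∖ 2πℤ^d, with the derivative bound ‖K'(y)‖ ≤ M · ρ(y)^{−(d+1)} for every y ∈ ℝ^d ∖ 2πℤ^d, where M > 0. Then for all x, y, y' ∈ ℝ^d with 2·ρ(y − y') < ρ(x − y'), one has |K(x − y) − K(x − y')| ≤ 2^{d+1} · M · ρ(y − y') · ρ(x − y')^{−(d+1)}. -/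
open Metric

/-- The lattice point `2πn ∈ ℝ^d` associated with `n ∈ ℤ^d`. -/
noncomputable def latticePoint (d : ℕ) (n : Fin d → ℤ) : EuclideanSpace ℝ (Fin d) :=
  WithLp.toLp 2 (fun i => 2 * Real.pi * n i)

/-- `ρ(a)`: the Euclidean distance from `a ∈ ℝ^d` to the lattice `2πℤ^d`. -/
noncomputable def torusRho (d : ℕ) (a : EuclideanSpace ℝ (Fin d)) : ℝ :=
  ⨅ n : Fin d → ℤ, ‖a - latticePoint d n‖

lemma torusRho_le (d : ℕ) (a : EuclideanSpace ℝ (Fin d)) (n : Fin d → ℤ) :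
    torusRho d a ≤ ‖a - latticePoint d n‖ :=
  ciInf_le ⟨0, by rintro _ ⟨n, rfl⟩; exact norm_nonneg _⟩ n

lemma torusRho_nonneg (d : ℕ) (a : EuclideanSpace ℝ (Fin d)) : 0 ≤ torusRho d a :=
  le_ciInf fun _ => norm_nonneg _

lemma torusRho_le_add (d : ℕ) (a z : EuclideanSpace ℝ (Fin d)) :
    torusRho d a ≤ torusRho d z + ‖a - z‖ := by
  rw [← sub_le_iff_le_add]
  refine le_ciInf fun n => ?_
  have h1 : torusRho d a ≤ ‖a - latticePoint d n‖ := torusRho_le d a n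
  have h2 : ‖a - latticePoint d n‖ ≤ ‖a - z‖ + ‖z - latticePoint d n‖ := by
    calc ‖a - latticePoint d n‖ = ‖(a - z) + (z - latticePoint d n)‖ := by abel_nf
    _ ≤ ‖a - z‖ + ‖z - latticePoint d n‖ := norm_add_le _ _
  linarith

lemma aux_zpow_anti (k : ℕ) (s t : ℝ) (hs : 0 < s) (hst : s ≤ t) :
    t ^ (-(k : ℤ)) ≤ s ^ (-(k : ℤ)) := by
  rw [zpow_neg, zpow_neg, zpow_natCast, zpow_natCast]
  exact inv_anti₀ (pow_pos hs k) (pow_le_pow_left₀ hs.le hst k)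

/-- Let `K : ℝ^d → ℂ` be `2πℤ^d`-periodic and differentiable away from the
lattice with `‖K'(y)‖ ≤ M · ρ(y)^{−(d+1)}`. Then for all `x, y, y'` with
`2ρ(y−y') < ρ(x−y')` one has
`|K(x−y) − K(x−y')| ≤ 2^{d+1} · M · ρ(y−y') · ρ(x−y')^{−(d+1)}`. -/
theorem periodic_kernel_lipschitz_estimate (d : ℕ) (hd : 1 ≤ d) (M : ℝ) (hM : 0 < M)
    (K : EuclideanSpace ℝ (Fin d) → ℂ)
    (hper : ∀ (y : EuclideanSpace ℝ (Fin d)) (n : Fin d → ℤ), K (y + latticePoint d n) = K y)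
    (hdiff : ∀ y : EuclideanSpace ℝ (Fin d), (¬ ∃ n : Fin d → ℤ, y = latticePoint d n) →
      DifferentiableAt ℝ K y ∧ ‖fderiv ℝ K y‖ ≤ M * torusRho d y ^ (-(d + 1 : ℤ)))
    (x y y' : EuclideanSpace ℝ (Fin d))
    (h : 2 * torusRho d (y - y') < torusRho d (x - y')) :
    ‖K (x - y) - K (x - y')‖
      ≤ 2 ^ (d + 1) * M * torusRho d (y - y') * torusRho d (x - y') ^ (-(d + 1 : ℤ)) := by
  set a := x - y' with ha
  set δ := y - y' with hδ
  set ra := torusRho d a with hra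
  set rδ := torusRho d δ with hrδ
  have hrδ0 : 0 ≤ rδ := torusRho_nonneg d δ
  have hra0 : 0 < ra := by linarith
  have hexp : (-(d + 1 : ℤ)) = -((d + 1 : ℕ) : ℤ) := by push_cast; ring
  -- the constant
  set C : ℝ := 2 ^ (d + 1) * M * ra ^ (-(d + 1 : ℤ)) with hC
  have hCpos : 0 < C := by
    have : (0:ℝ) < ra ^ (-(d + 1 : ℤ)) := zpow_pos hra0 _
    positivity
  have key : ∀ η > 0, ‖K (x - y) - K (x - y')‖ ≤ C * rδ + η := by
    intro η hη
    set g : ℝ := ra / 2 - rδ with hg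
    have hgpos : 0 < g := by rw [hg]; linarith
    set ε : ℝ := min (η / C) (g / 2) with hε
    have hεpos : 0 < ε := lt_min (div_pos hη hCpos) (by linarith)
    have hε1 : ε ≤ η / C := min_le_left _ _
    have hε2 : ε < g := lt_of_le_of_lt (min_le_right _ _) (by linarith)
    -- choose a near-optimal lattice point for δ
    have hlt : (⨅ n : Fin d → ℤ, ‖δ - latticePoint d n‖) < rδ + ε := by
      rw [hrδ, torusRho] at *; linarith
    obtain ⟨m, hm⟩ := exists_lt_of_ciInf_lt hlt
    set b : EuclideanSpace ℝ (Fin d) := (a - δ) + latticePoint d m with hb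
    have hKb : K b = K (x - y) := by
      rw [hb, hper]
      congr 1
      rw [ha, hδ]; abel
    have hba : ‖b - a‖ = ‖δ - latticePoint d m‖ := by
      rw [← norm_neg]; congr 1; rw [hb]; abel
    have hab : ‖a - b‖ = ‖δ - latticePoint d m‖ := by
      rw [← hba, norm_sub_rev]
    -- bound on segment points
    have hseg : ∀ z ∈ segment ℝ a b, ra / 2 < torusRho d z := by
      rintro z ⟨u, v, hu, hv, huv, rfl⟩
      have haz : a - (u • a + v • b) = v • (a - b) := by
        have hu1 : u = 1 - v := by linarith
        rw [hu1]; module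
      have hnaz : ‖a - (u • a + v • b)‖ ≤ ‖a - b‖ := by
        rw [haz, norm_smul, Real.norm_eq_abs, abs_of_nonneg hv]
        nlinarith [norm_nonneg (a - b)]
      have h1 : ra ≤ torusRho d (u • a + v • b) + ‖a - (u • a + v • b)‖ :=
        torusRho_le_add d a _
      have h2 : ‖a - b‖ < rδ + ε := by rw [hab]; exact hm
      have : rδ + ε < ra / 2 := by rw [hg] at hε2; linarith
      linarith
    have hnotlat : ∀ z ∈ segment ℝ a b, ¬ ∃ n : Fin d → ℤ, z = latticePoint d n := by
      rintro z hz ⟨n, rfl⟩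
      have h1 := hseg _ hz
      have h2 : torusRho d (latticePoint d n) ≤ 0 := by
        have := torusRho_le d (latticePoint d n) n
        simpa using this
      linarith
    -- derivative bound on the segment
    have hbound : ∀ z ∈ segment ℝ a b, ‖fderiv ℝ K z‖ ≤ C := by
      intro z hz
      have h1 := (hdiff z (hnotlat z hz)).2
      have h2 : torusRho d z ^ (-(d + 1 : ℤ)) ≤ (ra / 2) ^ (-(d + 1 : ℤ)) := by
        rw [hexp]
        exact aux_zpow_anti (d + 1) (ra / 2) (torusRho d z) (by linarith) (hseg z hz).le
      have h3 : (ra / 2 : ℝ) ^ (-(d + 1 : ℤ)) = 2 ^ (d + 1) * ra ^ (-(d + 1 : ℤ)) := by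
        rw [hexp, zpow_neg, zpow_neg, zpow_natCast, zpow_natCast, div_pow, inv_div,
          div_eq_mul_inv]
      calc ‖fderiv ℝ K z‖ ≤ M * torusRho d z ^ (-(d + 1 : ℤ)) := h1
        _ ≤ M * ((ra / 2) ^ (-(d + 1 : ℤ))) := by
            exact mul_le_mul_of_nonneg_left h2 hM.le
        _ = C := by rw [h3, hC]; ring
    have hdiffseg : ∀ z ∈ segment ℝ a b, DifferentiableAt ℝ K z := fun z hz =>
      (hdiff z (hnotlat z hz)).1
    have hmvt : ‖K b - K a‖ ≤ C * ‖b - a‖ :=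
      (convex_segment a b).norm_image_sub_le_of_norm_fderiv_le hdiffseg hbound
        (left_mem_segment ℝ a b) (right_mem_segment ℝ a b)
    rw [hKb] at hmvt
    have : ‖K (x - y) - K a‖ ≤ C * (rδ + ε) := by
      calc ‖K (x - y) - K a‖ ≤ C * ‖b - a‖ := hmvt
        _ ≤ C * (rδ + ε) := by
            apply mul_le_mul_of_nonneg_left _ hCpos.le
            rw [hba]; exact hm.le
    have hCε : C * ε ≤ η := by
      calc C * ε ≤ C * (η / C) := mul_le_mul_of_nonneg_left hε1 hCpos.le
        _ = η := by field_simp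
    calc ‖K (x - y) - K a‖ = ‖K (x - y) - K a‖ := rfl
      _ ≤ C * (rδ + ε) := this
      _ = C * rδ + C * ε := by ring
      _ ≤ C * rδ + η := by linarith
  have := le_of_forall_pos_le_add key
  calc ‖K (x - y) - K (x - y')‖ ≤ C * rδ := this
    _ = 2 ^ (d + 1) * M * rδ * ra ^ (-(d + 1 : ℤ)) := by rw [hC]; ring
end

section
/- Let E be a vector space over ℝ (or ℂ), let E₀ and E₁ be normed vector spaces together with linear maps ι₀ : E₀ → E and ι₁ : E₁ → E, and let A₀ ⊆ E₀ and A₁ ⊆ E₁ be linear subspaces. For u ∈ E and t > 0, define the K-functionals K_t(u; E₀, E₁) := inf{ ‖u₀‖ + t‖u₁‖ : u₀ ∈ E₀, u₁ ∈ E₁, u = ι₀u₀ + ι₁u₁ } and K_t(u; A₀, A₁) := inf{ ‖a₀‖ + t‖a₁‖ : a₀ ∈ A₀, a₁ ∈ A₁, u = ι₀a₀ + ι₁a₁ }. Assume: (normality) for j ∈ {0,1}, every e ∈ E_j with ι_j e ∈ ι₀(A₀) + ι₁(A₁) satisfies e ∈ A_j; and (K-closedness with constant C ≥ 1) K_t(a;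 A₀, A₁) ≤ C · K_t(a; E₀, E₁) for every a ∈ ι₀(A₀) + ι₁(A₁) and every t > 0. Then (A₀, A₁) is quasi-complemented with constant 4C: for every a ∈ ι₀(A₀) + ι₁(A₁) and every decomposition a = ι₀u₀ + ι₁u₁ with u₀ ∈ E₀ and u₁ ∈ E₁, there exist a₀ ∈ A₀ and a₁ ∈ A₁ with a = ι₀a₀ + ι₁a₁, ‖a₀‖ ≤ 4C·‖u₀‖ and ‖a₁‖ ≤ 4C·‖u₁‖. -/
open ENNReal

/-- Abstract interpolation: if a subcouple `(A₀, A₁)` of a compatible couple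
`(E₀, E₁)` (normed spaces mapped linearly into a common vector space `E`) is normal and
`K`-closed with constant `C ≥ 1`, then it is quasi-complemented with constant `4C`:
every decomposition `a = ι₀u₀ + ι₁u₁` of an element `a ∈ ι₀(A₀) + ι₁(A₁)` can be replaced by a
decomposition `a = ι₀a₀ + ι₁a₁` with `a₀ ∈ A₀`, `a₁ ∈ A₁`, `‖a₀‖ ≤ 4C‖u₀‖`, `‖a₁‖ ≤ 4C‖u₁‖`.
The `K`-functionals are expressed as infima in `ℝ≥0∞` (with value `⊤` over an empty set of
decompositions). -/
theorem Kclosed_normal_implies_quasicomplemented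
    {E E₀ E₁ : Type*} [AddCommGroup E] [Module ℝ E]
    [NormedAddCommGroup E₀] [NormedSpace ℝ E₀]
    [NormedAddCommGroup E₁] [NormedSpace ℝ E₁]
    (ι₀ : E₀ →ₗ[ℝ] E) (ι₁ : E₁ →ₗ[ℝ] E)
    (A₀ : Submodule ℝ E₀) (A₁ : Submodule ℝ E₁)
    (hnormal₀ : ∀ e : E₀, (∃ a₀ ∈ A₀, ∃ a₁ ∈ A₁, ι₀ e = ι₀ a₀ + ι₁ a₁) → e ∈ A₀)
    (hnormal₁ : ∀ e : E₁, (∃ a₀ ∈ A₀, ∃ a₁ ∈ A₁, ι₁ e = ι₀ a₀ + ι₁ a₁) → e ∈ A₁)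
    (C : ℝ) (hC : 1 ≤ C)
    (hKclosed : ∀ a : E, (∃ a₀ ∈ A₀, ∃ a₁ ∈ A₁, a = ι₀ a₀ + ι₁ a₁) → ∀ t : ℝ, 0 < t →
      (⨅ p : {p : E₀ × E₁ // p.1 ∈ A₀ ∧ p.2 ∈ A₁ ∧ a = ι₀ p.1 + ι₁ p.2},
          ENNReal.ofReal (‖(p : E₀ × E₁).1‖ + t * ‖(p : E₀ × E₁).2‖))
        ≤ ENNReal.ofReal C *
          ⨅ p : {p : E₀ × E₁ // a = ι₀ p.1 + ι₁ p.2},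
            ENNReal.ofReal (‖(p : E₀ × E₁).1‖ + t * ‖(p : E₀ × E₁).2‖)) :
    ∀ a : E, (∃ a₀ ∈ A₀, ∃ a₁ ∈ A₁, a = ι₀ a₀ + ι₁ a₁) →
      ∀ (u₀ : E₀) (u₁ : E₁), a = ι₀ u₀ + ι₁ u₁ →
        ∃ a₀ ∈ A₀, ∃ a₁ ∈ A₁, a = ι₀ a₀ + ι₁ a₁ ∧
          ‖a₀‖ ≤ 4 * C * ‖u₀‖ ∧ ‖a₁‖ ≤ 4 * C * ‖u₁‖ := by

  intro a ha u₀ u₁ hdecomp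
  obtain ⟨b₀, hb₀, b₁, hb₁, hb⟩ := ha
  by_cases h0 : u₀ = 0
  · subst h0
    have hu₁ : u₁ ∈ A₁ := hnormal₁ u₁ ⟨b₀, hb₀, b₁, hb₁, by
      simp only [map_zero, zero_add] at hdecomp; rw [← hdecomp]; exact hb⟩
    refine ⟨0, A₀.zero_mem, u₁, hu₁, by simpa using hdecomp, by simp, ?_⟩
    nlinarith [norm_nonneg u₁]
  by_cases h1 : u₁ = 0
  · subst h1
    have hu₀ : u₀ ∈ A₀ := hnormal₀ u₀ ⟨b₀, hb₀, b₁, hb₁, by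
      simp only [map_zero, add_zero] at hdecomp; rw [← hdecomp]; exact hb⟩
    refine ⟨u₀, hu₀, 0, A₁.zero_mem, by simpa using hdecomp, ?_, by simp⟩
    nlinarith [norm_nonneg u₀]
  have hn₀ : 0 < ‖u₀‖ := norm_pos_iff.mpr h0
  have hn₁ : 0 < ‖u₁‖ := norm_pos_iff.mpr h1
  set t := ‖u₀‖ / ‖u₁‖ with ht
  have htpos : 0 < t := div_pos hn₀ hn₁
  have key := hKclosed a ⟨b₀, hb₀, b₁, hb₁, hb⟩ t htpos
  have ht1 : t * ‖u₁‖ = ‖u₀‖ := div_mul_cancel₀ _ hn₁.ne'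
  have hE : (⨅ p : {p : E₀ × E₁ // a = ι₀ p.1 + ι₁ p.2},
      ENNReal.ofReal (‖(p : E₀ × E₁).1‖ + t * ‖(p : E₀ × E₁).2‖))
        ≤ ENNReal.ofReal (2 * ‖u₀‖) := by
    refine le_trans (iInf_le _ ⟨(u₀, u₁), hdecomp⟩) ?_
    apply ENNReal.ofReal_le_ofReal
    rw [ht1]; ring_nf; rfl
  have hlt : (⨅ p : {p : E₀ × E₁ // p.1 ∈ A₀ ∧ p.2 ∈ A₁ ∧ a = ι₀ p.1 + ι₁ p.2},
      ENNReal.ofReal (‖(p : E₀ × E₁).1‖ + t * ‖(p : E₀ × E₁).2‖))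
        < ENNReal.ofReal (4 * C * ‖u₀‖) := by
    calc _ ≤ ENNReal.ofReal C * ENNReal.ofReal (2 * ‖u₀‖) :=
          le_trans key (mul_le_mul_right hE _)
      _ = ENNReal.ofReal (C * (2 * ‖u₀‖)) := (ENNReal.ofReal_mul (by linarith)).symm
      _ < ENNReal.ofReal (4 * C * ‖u₀‖) := by
          rw [ENNReal.ofReal_lt_ofReal_iff (by nlinarith)]
          nlinarith
  obtain ⟨⟨⟨a₀, a₁⟩, hA₀, hA₁, hAdec⟩, hval⟩ := iInf_lt_iff.mp hlt
  have hreal : ‖a₀‖ + t * ‖a₁‖ < 4 * C * ‖u₀‖ :=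
    (ENNReal.ofReal_lt_ofReal_iff (by nlinarith)).mp hval
  have hta₁ : 0 ≤ t * ‖a₁‖ := mul_nonneg htpos.le (norm_nonneg a₁)
  refine ⟨a₀, hA₀, a₁, hA₁, hAdec, by nlinarith, ?_⟩
  have h2 : t * ‖a₁‖ < 4 * C * ‖u₀‖ := by nlinarith [norm_nonneg a₀]
  rw [ht, div_mul_eq_mul_div, div_lt_iff₀ hn₁] at h2
  nlinarith
end
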